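/- arXiv:2312.02829 — 2 statements merged into one kernel-verified Lean document; each statement's English description precedes it below -/
import Mathlib

section
/- Let D ≥ 1, let w be a standard Gaussian random vector on ℝ^D (i.e., w ∼ N(0, I_D), equivalently the coordinates w_1, …, w_D are i.i.d. standard normal), and let q, k ∈ ℝ^D. Then 𝔼[ exp(⟨w, q⟩/D^{1/4} − ‖q‖₂²/(2√D)) · exp(⟨w, k⟩/D^{1/4} − ‖k‖₂²/(2√D)) ] = exp(⟨q, k⟩/√D). -/
open MeasureTheory ProbabilityTheory
open scoped ENNReal NNReal

lemma integral_exp_gaussianReal (t : ℝ) :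
    ∫ x, Real.exp (t * x) ∂(gaussianReal 0 1) = Real.exp (t ^ 2 / 2) := by
  rw [gaussianReal_of_var_ne_zero _ one_ne_zero]
  have hmeas : Measurable fun x => (gaussianPDFReal 0 1 x).toNNReal :=
    (measurable_gaussianPDFReal 0 1).real_toNNReal
  have hwd : (volume.withDensity (gaussianPDF 0 1))
      = volume.withDensity (fun x => ((gaussianPDFReal 0 1 x).toNNReal : ℝ≥0∞)) := rfl
  rw [hwd, integral_withDensity_eq_integral_smul hmeas]
  have hpt : ∀ x, (gaussianPDFReal 0 1 x).toNNReal • Real.exp (t * x)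
      = Real.exp (t ^ 2 / 2) * gaussianPDFReal t 1 x := by
    intro x
    rw [NNReal.smul_def, smul_eq_mul, Real.coe_toNNReal _ (gaussianPDFReal_nonneg 0 1 x)]
    simp only [gaussianPDFReal_def, NNReal.coe_one]
    rw [mul_comm (Real.exp (t ^ 2 / 2)), mul_assoc, mul_assoc, ← Real.exp_add]
    rw [mul_assoc, ← Real.exp_add]
    congr 1
    ring
  simp_rw [hpt]
  rw [integral_const_mul, integral_gaussianPDFReal_eq_one t one_ne_zero, mul_one]

/-- **Unbiasedness of the FAVOR+ softmax kernel estimator.**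
For `w ∼ N(0, I_D)` (i.i.d. standard normal coordinates) and `q, k ∈ ℝ^D`,
`𝔼[exp(⟨w,q⟩/D^{1/4} − ‖q‖²/(2√D)) · exp(⟨w,k⟩/D^{1/4} − ‖k‖²/(2√D))] = exp(⟨q,k⟩/√D)`. -/
theorem stmt_2 {Ω : Type*} [MeasurableSpace Ω] (μ : Measure Ω) [IsProbabilityMeasure μ]
    (D : ℕ) (hD : 1 ≤ D) (w : Ω → Fin D → ℝ)
    (hwmeas : ∀ d, Measurable fun ω => w ω d)
    (hindep : iIndepFun
      (fun d ω => w ω d) μ)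
    (hwdist : ∀ d, Measure.map (fun ω => w ω d) μ = gaussianReal 0 1)
    (q k : Fin D → ℝ) :
    ∫ ω, Real.exp ((∑ d, w ω d * q d) / (D : ℝ) ^ ((1 : ℝ) / 4)
          - (∑ d, q d ^ 2) / (2 * Real.sqrt D)) *
        Real.exp ((∑ d, w ω d * k d) / (D : ℝ) ^ ((1 : ℝ) / 4)
          - (∑ d, k d ^ 2) / (2 * Real.sqrt D)) ∂μ
      = Real.exp ((∑ d, q d * k d) / Real.sqrt D) := by
  have hDpos : (0 : ℝ) < D := by exact_mod_cast hD
  set r : ℝ := (D : ℝ) ^ ((1 : ℝ) / 4) with hr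
  have hrpos : 0 < r := Real.rpow_pos_of_pos hDpos _
  have hr2 : r ^ 2 = Real.sqrt D := by
    rw [hr, ← Real.rpow_natCast ((D:ℝ) ^ ((1:ℝ)/4)) 2, ← Real.rpow_mul hDpos.le,
      Real.sqrt_eq_rpow]
    norm_num
  -- coefficients
  set c : Fin D → ℝ := fun d => (q d + k d) / r with hc
  set X : Fin D → Ω → ℝ := fun d ω => c d * w ω d with hX
  have hXmeas : ∀ d, Measurable (X d) := fun d => (hwmeas d).const_mul _
  have hXindep : iIndepFun X μ :=
    hindep.comp (fun d x => c d * x) (fun d => measurable_const_mul _)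
  set B : ℝ := (∑ d, q d ^ 2) / (2 * Real.sqrt D) + (∑ d, k d ^ 2) / (2 * Real.sqrt D) with hB
  -- pointwise rewrite
  have hpt : ∀ ω, Real.exp ((∑ d, w ω d * q d) / r - (∑ d, q d ^ 2) / (2 * Real.sqrt D)) *
      Real.exp ((∑ d, w ω d * k d) / r - (∑ d, k d ^ 2) / (2 * Real.sqrt D))
      = Real.exp (-B) * Real.exp (1 * (∑ d, X d) ω) := by
    intro ω
    rw [← Real.exp_add, ← Real.exp_add]
    congr 1
    have hsum : (∑ d, X d) ω = (∑ d, w ω d * q d) / r + (∑ d, w ω d * k d) / r := by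
      simp only [Finset.sum_apply, hX, hc, Finset.sum_div, ← Finset.sum_add_distrib]
      exact Finset.sum_congr rfl fun d _ => by field_simp
    rw [hsum, hB]; ring
  simp_rw [hpt]
  rw [integral_const_mul]
  have hmgf : ∫ ω, Real.exp (1 * (∑ d, X d) ω) ∂μ = ∏ d, mgf (X d) μ 1 := by
    rw [← hXindep.mgf_sum hXmeas Finset.univ]; rfl
  have hmgfd : ∀ d, mgf (X d) μ 1 = Real.exp (c d ^ 2 / 2) := by
    intro d
    rw [mgf]
    have : ∀ ω, Real.exp (1 * X d ω) = Real.exp (c d * w ω d) := by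
      intro ω; rw [one_mul]
    simp_rw [this]
    rw [← integral_exp_gaussianReal (c d), ← hwdist d,
      integral_map (hwmeas d).aemeasurable]
    exact (Real.measurable_exp.comp (measurable_const_mul _)).aestronglyMeasurable
  rw [hmgf]
  simp_rw [hmgfd]
  rw [← Real.exp_sum, ← Real.exp_add]
  congr 1
  have hsq : ∀ d, c d ^ 2 / 2 = (q d ^ 2 + 2 * (q d * k d) + k d ^ 2) / (2 * Real.sqrt D) := by
    intro d
    rw [hc]
    rw [div_pow, hr2]
    have h2 : (q d + k d) ^ 2 = q d ^ 2 + 2 * (q d * k d) + k d ^ 2 := by ring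
    rw [h2]
    ring
  simp_rw [hsq]
  have hsd : Real.sqrt D ≠ 0 := by positivity
  have hexp : (∑ d, (q d ^ 2 + 2 * (q d * k d) + k d ^ 2))
      = (∑ d, q d ^ 2) + 2 * (∑ d, q d * k d) + (∑ d, k d ^ 2) := by
    rw [Finset.sum_add_distrib, Finset.sum_add_distrib, ← Finset.mul_sum]
  rw [← Finset.sum_div, hexp, hB]
  have hfin : -((∑ d, q d ^ 2) / (2 * Real.sqrt D) + (∑ d, k d ^ 2) / (2 * Real.sqrt D))
      + ((∑ d, q d ^ 2) + 2 * (∑ d, q d * k d) + (∑ d, k d ^ 2)) / (2 * Real.sqrt D)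
      = 2 * (∑ d, q d * k d) / (2 * Real.sqrt D) := by ring
  rw [hfin, mul_div_mul_left _ _ two_ne_zero]
end

section
/- Let S ∼ N(0, 1) be a standard normal random variable and let b ≥ 0. Then 𝔼[ S² · (2·Φ(b·|S|) − 1) ] = (2/π)·( b/(1+b²) + arctan(b) ), where Φ(s) = (1/√(2π)) ∫_{−∞}^s exp(−t²/2) dt is the standard normal cumulative distribution function. Equivalently, 4·∫_0^∞ s²·φ(s)·Φ(b·s) ds = 1 + (2/π)·( b/(1+b²) + arctan(b) ), where φ is the standard normal density. -/
open MeasureTheory ProbabilityTheory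
open scoped ENNReal NNReal

/-- The standard normal cumulative distribution function
`Φ(s) = (1/√(2π)) ∫_{−∞}^s exp(−t²/2) dt`. -/
noncomputable def stdNormalCDF (s : ℝ) : ℝ :=
  (Real.sqrt (2 * Real.pi))⁻¹ * ∫ t in Set.Iic s, Real.exp (-t ^ 2 / 2)

open Real Set Filter
open scoped Topology

lemma intExp : Integrable (fun t : ℝ => rexp (-t ^ 2 / 2)) := by
  have h := integrable_exp_neg_mul_sq (by norm_num : (0:ℝ) < 1/2)
  convert h using 2 with t
  ring_nf

lemma sqrt_two_pi_pos : 0 < Real.sqrt (2 * π) :=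
  Real.sqrt_pos.mpr (by positivity)

lemma integral_exp_total : ∫ t : ℝ, rexp (-t ^ 2 / 2) = Real.sqrt (2 * π) := by
  have h := integral_gaussian (1/2 : ℝ)
  have h2 : ∀ t : ℝ, rexp (-(1/2 : ℝ) * t ^ 2) = rexp (-t ^ 2 / 2) := by
    intro t; ring_nf
  rw [show (fun t : ℝ => rexp (-t ^ 2 / 2)) = fun t : ℝ => rexp (-(1/2:ℝ) * t ^ 2) by
    funext t; rw [h2]]
  rw [h]
  rw [show π / (1/2 : ℝ) = 2 * π by ring]

lemma cdf_hasDerivAt (x : ℝ) :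
    HasDerivAt stdNormalCDF ((Real.sqrt (2 * π))⁻¹ * rexp (-x ^ 2 / 2)) x := by
  have key : stdNormalCDF = fun s =>
      (Real.sqrt (2 * π))⁻¹ * ((∫ t in Iic (0:ℝ), rexp (-t ^ 2 / 2))
        + ∫ t in (0:ℝ)..s, rexp (-t ^ 2 / 2)) := by
    funext s
    unfold stdNormalCDF
    congr 1
    rw [← intervalIntegral.integral_Iic_sub_Iic intExp.integrableOn intExp.integrableOn]
    ring
  rw [key]
  have hcont : Continuous fun t : ℝ => rexp (-t ^ 2 / 2) := by continuity
  have hftc : HasDerivAt (fun s => ∫ t in (0:ℝ)..s, rexp (-t ^ 2 / 2))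
      (rexp (-x ^ 2 / 2)) x := by
    exact intervalIntegral.integral_hasDerivAt_right (hcont.intervalIntegrable _ _)
      (hcont.stronglyMeasurableAtFilter _ _) hcont.continuousAt
  simpa using ((hftc.const_add _).const_mul ((Real.sqrt (2 * π))⁻¹))

lemma cdf_continuous : Continuous stdNormalCDF :=
  continuous_iff_continuousAt.mpr fun x => (cdf_hasDerivAt x).continuousAt

lemma cdf_nonneg (s : ℝ) : 0 ≤ stdNormalCDF s :=
  mul_nonneg (inv_nonneg.mpr (Real.sqrt_nonneg _))
    (integral_nonneg fun t => (Real.exp_pos _).le)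

lemma cdf_le_one (s : ℝ) : stdNormalCDF s ≤ 1 := by
  have h1 : ∫ t in Iic s, rexp (-t ^ 2 / 2) ≤ ∫ t : ℝ, rexp (-t ^ 2 / 2) :=
    setIntegral_le_integral intExp (ae_of_all _ fun t => (Real.exp_pos _).le)
  rw [integral_exp_total] at h1
  calc stdNormalCDF s ≤ (Real.sqrt (2 * π))⁻¹ * Real.sqrt (2 * π) :=
        mul_le_mul_of_nonneg_left h1 (inv_nonneg.mpr (Real.sqrt_nonneg _))
    _ = 1 := inv_mul_cancel₀ sqrt_two_pi_pos.ne'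

lemma integral_exp_Ioi : ∫ t in Ioi (0:ℝ), rexp (-t ^ 2 / 2) = Real.sqrt (2 * π) / 2 := by
  have h := integral_gaussian_Ioi (1/2 : ℝ)
  rw [show (fun t : ℝ => rexp (-t ^ 2 / 2)) = fun t : ℝ => rexp (-(1/2:ℝ) * t ^ 2) by
    funext t; ring_nf]
  rw [h, show π / (1/2 : ℝ) = 2 * π by ring]

lemma cdf_zero : stdNormalCDF 0 = 1/2 := by
  have heven : ∫ t in Iic (0:ℝ), rexp (-t ^ 2 / 2) = ∫ t in Ioi (0:ℝ), rexp (-t ^ 2 / 2) := by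
    have h := integral_comp_neg_Iic (0:ℝ) (fun t : ℝ => rexp (-t ^ 2 / 2))
    simp only [neg_zero, neg_sq] at h
    exact h
  have hIci := integral_exp_Ioi
  unfold stdNormalCDF
  rw [heven, hIci]
  field_simp

lemma integrable_pow_mul_exp (n : ℕ) {a : ℝ} (ha : 0 < a) :
    Integrable (fun x : ℝ => x ^ n * rexp (-a * x ^ 2)) := by
  have h := integrable_rpow_mul_exp_neg_mul_sq ha
    (show (-1:ℝ) < n from lt_of_lt_of_le (by norm_num) (Nat.cast_nonneg n))
  simpa [Real.rpow_natCast] using h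

lemma integrable_pow_mul_exp' (n : ℕ) :
    Integrable (fun x : ℝ => x ^ n * rexp (-x ^ 2 / 2)) := by
  have h := integrable_pow_mul_exp n (show (0:ℝ) < 1/2 by norm_num)
  convert h using 2 with x
  ring_nf

lemma tendsto_pow_mul_exp_sq (n : ℕ) {a : ℝ} (ha : 0 < a) :
    Tendsto (fun s : ℝ => s ^ n * rexp (-a * s ^ 2)) atTop (𝓝 0) := by
  have h1 := tendsto_rpow_mul_exp_neg_mul_atTop_nhds_zero ((n:ℝ)/2) a ha
  have h2 : Tendsto (fun s : ℝ => s ^ 2) atTop atTop := tendsto_pow_atTop two_ne_zero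
  refine (h1.comp h2).congr' ?_
  filter_upwards [eventually_ge_atTop (0:ℝ)] with s hs
  simp only [Function.comp_apply]
  congr 1
  rw [← Real.rpow_natCast s 2, ← Real.rpow_mul hs,
    show ((2:ℕ):ℝ) * ((n:ℝ)/2) = ((n:ℕ):ℝ) by push_cast; ring, Real.rpow_natCast]

lemma integral_cube_exp {a : ℝ} (ha : 0 < a) :
    ∫ s in Ioi (0:ℝ), s ^ 3 * rexp (-a * s ^ 2) = 1 / (2 * a ^ 2) := by
  have hF : ∀ s : ℝ, HasDerivAt
      (fun s : ℝ => -(s ^ 2 / (2 * a) + 1 / (2 * a ^ 2)) * rexp (-a * s ^ 2))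
      (s ^ 3 * rexp (-a * s ^ 2)) s := by
    intro s
    have h1 := (((hasDerivAt_pow 2 s).div_const (2 * a)).add_const (1 / (2 * a ^ 2))).neg
    have h2 : HasDerivAt (fun s : ℝ => rexp (-a * s ^ 2))
        (rexp (-a * s ^ 2) * (-a * (2 * s))) s := by
      simpa using ((hasDerivAt_pow 2 s).const_mul (-a)).exp
    refine (h1.fun_mul h2).congr_deriv ?_
    push_cast
    simp only [Pi.neg_apply]
    field_simp
    ring
  have htop : Tendsto
      (fun s : ℝ => -(s ^ 2 / (2 * a) + 1 / (2 * a ^ 2)) * rexp (-a * s ^ 2))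
      atTop (𝓝 0) := by
    have e1 := (tendsto_pow_mul_exp_sq 2 ha).div_const (2 * a)
    have e2 := (tendsto_pow_mul_exp_sq 0 ha).div_const (2 * a ^ 2)
    have e3 := (e1.add e2).neg
    simp only [zero_div, add_zero, neg_zero] at e3
    refine e3.congr fun s => ?_
    ring
  have key := integral_Ioi_of_hasDerivAt_of_tendsto' (a := (0:ℝ)) (fun x _ => hF x)
    ((integrable_pow_mul_exp 3 ha).integrableOn) htop
  rw [key]
  norm_num

lemma integral_sq_exp_Ioi :
    ∫ s in Ioi (0:ℝ), s ^ 2 * rexp (-s ^ 2 / 2) = Real.sqrt (2 * π) / 2 := by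
  have hF : ∀ s : ℝ, HasDerivAt (fun s : ℝ => -s * rexp (-s ^ 2 / 2))
      ((s ^ 2 - 1) * rexp (-s ^ 2 / 2)) s := by
    intro s
    have h1 : HasDerivAt (fun s : ℝ => -s) (-1) s := (hasDerivAt_id s).neg
    have h2 : HasDerivAt (fun s : ℝ => rexp (-s ^ 2 / 2))
        (rexp (-s ^ 2 / 2) * (-(2 * s) / 2)) s := by
      simpa using (((hasDerivAt_pow 2 s).neg).div_const 2).exp
    refine (h1.fun_mul h2).congr_deriv ?_
    ring
  have htop : Tendsto (fun s : ℝ => -s * rexp (-s ^ 2 / 2)) atTop (𝓝 0) := by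
    have e1 := (tendsto_pow_mul_exp_sq 1 (show (0:ℝ) < 1/2 by norm_num)).neg
    simp only [neg_zero] at e1
    refine e1.congr fun s => ?_
    rw [pow_one]
    rw [show -(1/2:ℝ) * s ^ 2 = -s ^ 2 / 2 by ring]
    ring
  have hint : IntegrableOn (fun s : ℝ => (s ^ 2 - 1) * rexp (-s ^ 2 / 2)) (Ioi 0) := by
    have := (integrable_pow_mul_exp' 2).sub (integrable_pow_mul_exp' 0)
    refine (this.congr ?_).integrableOn
    refine ae_of_all _ fun s => ?_
    simp only [Pi.sub_apply, pow_zero, one_mul]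
    ring
  have key := integral_Ioi_of_hasDerivAt_of_tendsto' (a := (0:ℝ)) (fun x _ => hF x) hint htop
  simp only [neg_zero, zero_mul, zero_sub, ne_eq] at key
  have hsub : ∫ s in Ioi (0:ℝ), (s ^ 2 - 1) * rexp (-s ^ 2 / 2)
      = (∫ s in Ioi (0:ℝ), s ^ 2 * rexp (-s ^ 2 / 2)) - ∫ s in Ioi (0:ℝ), rexp (-s ^ 2 / 2) := by
    rw [← integral_sub ((integrable_pow_mul_exp' 2).integrableOn) intExp.integrableOn]
    refine setIntegral_congr_fun measurableSet_Ioi fun s _ => ?_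
    ring
  rw [hsub, integral_exp_Ioi] at key
  linarith [key]

noncomputable def gfun (b : ℝ) : ℝ :=
  ∫ s in Ioi (0:ℝ), s ^ 2 * (rexp (-s ^ 2 / 2) / Real.sqrt (2 * π)) * stdNormalCDF (b * s)

lemma gfun_integrand_cont (x : ℝ) : Continuous
    (fun s : ℝ => s ^ 2 * (rexp (-s ^ 2 / 2) / Real.sqrt (2 * π)) * stdNormalCDF (x * s)) := by
  apply Continuous.mul
  · continuity
  · exact cdf_continuous.comp (continuous_const.mul continuous_id)

lemma gfun_integrable (x : ℝ) : Integrable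
    (fun s : ℝ => s ^ 2 * (rexp (-s ^ 2 / 2) / Real.sqrt (2 * π)) * stdNormalCDF (x * s)) := by
  refine Integrable.mono' ((integrable_pow_mul_exp' 2).div_const (Real.sqrt (2 * π)))
    (gfun_integrand_cont x).aestronglyMeasurable (ae_of_all _ fun s => ?_)
  rw [Real.norm_eq_abs, abs_mul]
  have h1 : 0 ≤ s ^ 2 * (rexp (-s ^ 2 / 2) / Real.sqrt (2 * π)) := by positivity
  rw [abs_of_nonneg h1, abs_of_nonneg (cdf_nonneg _)]
  calc s ^ 2 * (rexp (-s ^ 2 / 2) / Real.sqrt (2 * π)) * stdNormalCDF (x * s)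
      ≤ s ^ 2 * (rexp (-s ^ 2 / 2) / Real.sqrt (2 * π)) * 1 :=
        mul_le_mul_of_nonneg_left (cdf_le_one _) h1
    _ = s ^ 2 * rexp (-s ^ 2 / 2) / Real.sqrt (2 * π) := by ring

lemma gfun_hasDeriv (b : ℝ) : HasDerivAt gfun (1 / (π * (1 + b ^ 2) ^ 2)) b := by
  have hc2 : Real.sqrt (2 * π) * Real.sqrt (2 * π) = 2 * π :=
    Real.mul_self_sqrt (by positivity)
  have hder := hasDerivAt_integral_of_dominated_loc_of_deriv_le
    (μ := volume.restrict (Ioi (0:ℝ)))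
    (F := fun x s => s ^ 2 * (rexp (-s ^ 2 / 2) / Real.sqrt (2 * π)) * stdNormalCDF (x * s))
    (F' := fun x s => s ^ 2 * (rexp (-s ^ 2 / 2) / Real.sqrt (2 * π)) *
      (s * ((Real.sqrt (2 * π))⁻¹ * rexp (-(x * s) ^ 2 / 2))))
    (x₀ := b) (bound := fun s => |s| ^ 3 * rexp (-s ^ 2 / 2) / (2 * π))
    (Metric.ball_mem_nhds b one_pos)
    (Filter.Eventually.of_forall fun x => ((gfun_integrand_cont x).aestronglyMeasurable).restrict)
    (gfun_integrable b).integrableOn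
    (Continuous.aestronglyMeasurable (by continuity)).restrict
    ?_ ?_ ?_
  · have hval : (∫ s in Ioi (0:ℝ), s ^ 2 * (rexp (-s ^ 2 / 2) / Real.sqrt (2 * π)) *
        (s * ((Real.sqrt (2 * π))⁻¹ * rexp (-(b * s) ^ 2 / 2))))
        = 1 / (π * (1 + b ^ 2) ^ 2) := by
      have hpos : (0:ℝ) < (1 + b ^ 2) / 2 := by positivity
      have hcongr : ∀ s ∈ Ioi (0:ℝ), s ^ 2 * (rexp (-s ^ 2 / 2) / Real.sqrt (2 * π)) *
          (s * ((Real.sqrt (2 * π))⁻¹ * rexp (-(b * s) ^ 2 / 2)))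
          = (1 / (2 * π)) * (s ^ 3 * rexp (-((1 + b ^ 2) / 2) * s ^ 2)) := by
        intro s _
        have hexp : rexp (-s ^ 2 / 2) * rexp (-(b * s) ^ 2 / 2)
            = rexp (-((1 + b ^ 2) / 2) * s ^ 2) := by
          rw [← Real.exp_add]; ring_nf
        rw [show s ^ 2 * (rexp (-s ^ 2 / 2) / Real.sqrt (2 * π)) *
            (s * ((Real.sqrt (2 * π))⁻¹ * rexp (-(b * s) ^ 2 / 2)))
            = (rexp (-s ^ 2 / 2) * rexp (-(b * s) ^ 2 / 2)) * s ^ 3 *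
              (Real.sqrt (2 * π) * Real.sqrt (2 * π))⁻¹ by ring, hc2, hexp]
        ring
      rw [setIntegral_congr_fun measurableSet_Ioi hcongr, integral_const_mul,
        integral_cube_exp hpos]
      have hπ := Real.pi_pos
      have h1b : (0:ℝ) < 1 + b ^ 2 := by positivity
      field_simp
    rw [← hval]
    exact hder.2
  · -- h_bound
    filter_upwards [ae_restrict_mem measurableSet_Ioi] with s hs
    intro x _
    have hs' : (0:ℝ) ≤ s := le_of_lt hs
    have hnn : 0 ≤ s ^ 2 * (rexp (-s ^ 2 / 2) / Real.sqrt (2 * π)) *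
        (s * ((Real.sqrt (2 * π))⁻¹ * rexp (-(x * s) ^ 2 / 2))) := by
      apply mul_nonneg (by positivity)
      exact mul_nonneg hs' (by positivity)
    rw [Real.norm_eq_abs, abs_of_nonneg hnn, abs_of_nonneg hs']
    have hexple : rexp (-(x * s) ^ 2 / 2) ≤ 1 := by
      rw [Real.exp_le_one_iff]
      have : (0:ℝ) ≤ (x * s) ^ 2 := sq_nonneg _
      linarith
    calc s ^ 2 * (rexp (-s ^ 2 / 2) / Real.sqrt (2 * π)) *
        (s * ((Real.sqrt (2 * π))⁻¹ * rexp (-(x * s) ^ 2 / 2)))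
        = (s ^ 3 * rexp (-s ^ 2 / 2) / (2 * π)) * rexp (-(x * s) ^ 2 / 2) := by
          rw [show s ^ 2 * (rexp (-s ^ 2 / 2) / Real.sqrt (2 * π)) *
            (s * ((Real.sqrt (2 * π))⁻¹ * rexp (-(x * s) ^ 2 / 2)))
            = s ^ 3 * rexp (-s ^ 2 / 2) *
              (Real.sqrt (2 * π) * Real.sqrt (2 * π))⁻¹ * rexp (-(x * s) ^ 2 / 2) by ring,
            hc2]
          ring
      _ ≤ (s ^ 3 * rexp (-s ^ 2 / 2) / (2 * π)) * 1 :=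
          mul_le_mul_of_nonneg_left hexple (by positivity)
      _ = s ^ 3 * rexp (-s ^ 2 / 2) / (2 * π) := by ring
  · -- bound integrable
    have h := ((integrable_pow_mul_exp' 3).div_const (2 * π)).integrableOn
      (s := Ioi (0:ℝ))
    refine h.congr_fun (fun s hs => ?_) measurableSet_Ioi
    rw [abs_of_nonneg (le_of_lt hs)]
  · -- h_diff
    refine ae_of_all _ fun s => fun x _ => ?_
    have h1 : HasDerivAt (fun y : ℝ => y * s) s x := hasDerivAt_mul_const s
    have h2 := (cdf_hasDerivAt (x * s)).comp x h1
    have h3 := h2.const_mul (s ^ 2 * (rexp (-s ^ 2 / 2) / Real.sqrt (2 * π)))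
    refine h3.congr_deriv ?_
    ring

lemma gfun_zero : gfun 0 = 1 / 4 := by
  unfold gfun
  have hcongr : ∀ s ∈ Ioi (0:ℝ), s ^ 2 * (rexp (-s ^ 2 / 2) / Real.sqrt (2 * π)) *
      stdNormalCDF (0 * s) = (1 / (2 * Real.sqrt (2 * π))) * (s ^ 2 * rexp (-s ^ 2 / 2)) := by
    intro s _
    rw [zero_mul, cdf_zero]
    ring
  rw [setIntegral_congr_fun measurableSet_Ioi hcongr, integral_const_mul, integral_sq_exp_Ioi]
  field_simp
  ring

noncomputable def Rfun (x : ℝ) : ℝ :=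
  1 / 4 + (1 / (2 * π)) * (x / (1 + x ^ 2) + Real.arctan x)

lemma Rfun_hasDeriv (x : ℝ) : HasDerivAt Rfun (1 / (π * (1 + x ^ 2) ^ 2)) x := by
  have h1b : (0:ℝ) < 1 + x ^ 2 := by positivity
  have hq : HasDerivAt (fun y : ℝ => y / (1 + y ^ 2))
      ((1 * (1 + x ^ 2) - x * (2 * x)) / (1 + x ^ 2) ^ 2) x := by
    have hden : HasDerivAt (fun y : ℝ => 1 + y ^ 2) (2 * x) x := by
      simpa using (hasDerivAt_pow 2 x).const_add 1
    exact (hasDerivAt_id x).div hden h1b.ne'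
  have h := ((hq.add (Real.hasDerivAt_arctan x)).const_mul (1 / (2 * π))).const_add (1/4)
  have heq : (fun y : ℝ => 1/4 + 1 / (2 * π) * (y / (1 + y ^ 2) + Real.arctan y)) = Rfun := rfl
  replace h : HasDerivAt Rfun _ x := h
  convert h using 1
  have hπ := Real.pi_pos
  field_simp
  ring

lemma gfun_eq_Rfun (x : ℝ) : gfun x = Rfun x := by
  have hd : ∀ y : ℝ, HasDerivAt (fun z => gfun z - Rfun z) 0 y := fun y => by
    have := (gfun_hasDeriv y).sub (Rfun_hasDeriv y); rw [sub_self] at this; exact this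
  have hconst := is_const_of_deriv_eq_zero (f := fun z => gfun z - Rfun z)
    (fun y => (hd y).differentiableAt) (fun y => (hd y).deriv) x 0
  have hR0 : Rfun 0 = 1 / 4 := by simp [Rfun]
  have hg0 := gfun_zero
  linarith [hconst]

/-- **An Owen-type Gaussian integral.** For `S ∼ N(0,1)` and `b ≥ 0`,
`𝔼[S²·(2Φ(b|S|) − 1)] = (2/π)·(b/(1+b²) + arctan b)`; equivalently
`4∫_0^∞ s²·φ(s)·Φ(bs) ds = 1 + (2/π)·(b/(1+b²) + arctan b)`. -/
theorem stmt_7 (b : ℝ) (hb : 0 ≤ b) :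
    (∫ s, s ^ 2 * (2 * stdNormalCDF (b * |s|) - 1) ∂(gaussianReal 0 1)
        = (2 / Real.pi) * (b / (1 + b ^ 2) + Real.arctan b)) ∧
      (4 * ∫ s in Set.Ioi (0 : ℝ),
            s ^ 2 * (Real.exp (-s ^ 2 / 2) / Real.sqrt (2 * Real.pi)) * stdNormalCDF (b * s)
        = 1 + (2 / Real.pi) * (b / (1 + b ^ 2) + Real.arctan b)) := by
  have hπ := Real.pi_pos
  have hgR := gfun_eq_Rfun b
  have hpart2 : 4 * gfun b = 1 + (2 / π) * (b / (1 + b ^ 2) + Real.arctan b) := by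
    rw [hgR]
    unfold Rfun
    field_simp
    ring
  constructor
  · -- part 1
    set Q : ℝ → ℝ := fun u =>
      (rexp (-u ^ 2 / 2) / Real.sqrt (2 * π)) * (u ^ 2 * (2 * stdNormalCDF (b * u) - 1))
      with hQ
    have hmeas : (gaussianReal 0 1) = volume.withDensity (gaussianPDF 0 1) :=
      gaussianReal_of_var_ne_zero 0 one_ne_zero
    rw [hmeas,
      show gaussianPDF 0 1 = fun x =>
        ((Real.toNNReal (gaussianPDFReal 0 1 x) : ℝ≥0) : ℝ≥0∞) from rfl,
      integral_withDensity_eq_integral_smul (measurable_gaussianPDFReal 0 1).real_toNNReal _]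
    have step1 : (∫ x : ℝ, (Real.toNNReal (gaussianPDFReal 0 1 x)) •
        (x ^ 2 * (2 * stdNormalCDF (b * |x|) - 1))) = ∫ x : ℝ, Q |x| := by
      refine integral_congr_ae (ae_of_all _ fun x => ?_)
      simp only [NNReal.smul_def, smul_eq_mul]
      rw [Real.coe_toNNReal _ (gaussianPDFReal_nonneg 0 1 x)]
      unfold gaussianPDFReal
      rw [hQ]
      simp only [NNReal.coe_one, mul_one, sub_zero]
      rw [sq_abs]
      ring
    rw [step1, integral_comp_abs (f := Q)]
    have step3 : (∫ s in Ioi (0:ℝ), Q s) = 2 * gfun b - 1 / 2 := by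
      have e1 : ∀ s ∈ Ioi (0:ℝ), Q s =
          2 * (s ^ 2 * (rexp (-s ^ 2 / 2) / Real.sqrt (2 * π)) * stdNormalCDF (b * s))
            - s ^ 2 * rexp (-s ^ 2 / 2) / Real.sqrt (2 * π) := by
        intro s _
        rw [hQ]
        ring
      rw [setIntegral_congr_fun measurableSet_Ioi e1,
        integral_sub ((gfun_integrable b).const_mul 2).integrableOn
          ((integrable_pow_mul_exp' 2).div_const (Real.sqrt (2 * π))).integrableOn,
        integral_const_mul, integral_div, integral_sq_exp_Ioi]
      have h12 : Real.sqrt (2 * π) / 2 / Real.sqrt (2 * π) = 1 / 2 := by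
        field_simp
      rw [h12]
      rfl
    rw [step3]
    linarith [hpart2]
  · -- part 2
    unfold gfun at hpart2
    exact hpart2
end
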